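/- Let M be a set of interpretations. Suppose there are DL-Lite assertions φ and ψ such that (1) every J ∈ M satisfies φ or satisfies ψ, and (2) there are J_φ, J_ψ ∈ M with J_φ ⊭ φ and J_ψ ⊭ ψ. Then there is no DL-Lite_FR knowledge base K such that M = Mod(K). -/

import Mathlib

namespace DLLite

/-- The countably infinite domain of constants. -/
abbrev Δ : Type := ℕ
/-- Countably infinite set of concept names. -/
abbrev ConceptName : Type := ℕ
/-- Countably infinite set of role names. -/
abbrev RoleName : Type := ℕ

/-- An interpretation assigns a set of domain elements to each concept name
and a binary relation to each role name; constants are interpreted as themselves. -/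
structure Interp where
  concept : ConceptName → Set Δ
  role : RoleName → Set (Δ × Δ)

/-- Basic roles: `P` or `P⁻`. -/
inductive BasicRole where
  | pos (P : RoleName)
  | inv (P : RoleName)
deriving DecidableEq

def BasicRole.interp (R : BasicRole) (I : Interp) : Set (Δ × Δ) :=
  match R with
  | .pos P => I.role P
  | .inv P => {p | (p.2, p.1) ∈ I.role P}

/-- Basic concepts: `A` or `∃R`. -/
inductive BasicConcept where
  | atom (A : ConceptName)
  | ex (R : BasicRole)
deriving DecidableEq

def BasicConcept.interp (B : BasicConcept) (I : Interp) : Set Δ :=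
  match B with
  | .atom A => I.concept A
  | .ex R => {o | ∃ o', (o, o') ∈ R.interp I}

/-- DL-Lite_FR assertions: (negative) concept/role inclusions, functionality
assertions, and membership assertions. -/
inductive Assertion where
  | conceptIncl (B1 B2 : BasicConcept)
  | conceptDisj (B1 B2 : BasicConcept)
  | roleIncl (R1 R2 : BasicRole)
  | roleDisj (R1 R2 : BasicRole)
  | funct (R : BasicRole)
  | memberC (A : ConceptName) (a : Δ)
  | memberR (P : RoleName) (a b : Δ)
deriving DecidableEq

/-- Satisfaction of an assertion by an interpretation. -/
def Interp.sat (I : Interp) : Assertion → Prop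
  | .conceptIncl B1 B2 => B1.interp I ⊆ B2.interp I
  | .conceptDisj B1 B2 => B1.interp I ∩ B2.interp I = ∅
  | .roleIncl R1 R2 => R1.interp I ⊆ R2.interp I
  | .roleDisj R1 R2 => R1.interp I ∩ R2.interp I = ∅
  | .funct R => ∀ o o1 o2, (o, o1) ∈ R.interp I → (o, o2) ∈ R.interp I → o1 = o2
  | .memberC A a => a ∈ I.concept A
  | .memberR P a b => (a, b) ∈ I.role P

/-- TBox assertions: inclusion or functionality assertions. -/
def Assertion.isTBox : Assertion → Prop
  | .memberC _ _ => False
  | .memberR _ _ _ => False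
  | _ => True

/-- Membership (ABox) assertions. -/
def Assertion.isMembership : Assertion → Prop
  | .memberC _ _ => True
  | .memberR _ _ _ => True
  | _ => False

/-- The constants occurring in an assertion. -/
def Assertion.constants : Assertion → Set Δ
  | .memberC _ a => {a}
  | .memberR _ a b => {a, b}
  | _ => ∅

/-- A knowledge base: a finite set of assertions (TBox ∪ ABox). -/
abbrev KB := Finset Assertion

/-- The set of models of a KB. -/
def Mod (K : KB) : Set Interp := {I | ∀ a ∈ K, I.sat a}

/-- Interpretations falsifying at least one assertion of `K`. -/
def NonMod (K : KB) : Set Interp := {I | ∃ a ∈ K, ¬ I.sat a}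

/-- The constants occurring in a KB. -/
def KB.constants (K : KB) : Set Δ := ⋃ a ∈ K, Assertion.constants a

/-- Atoms: ground facts `A(o)` or `P(o,o')`. -/
inductive Atom where
  | c (A : ConceptName) (o : Δ)
  | r (P : RoleName) (o o' : Δ)
deriving DecidableEq

/-- The atom set of an interpretation. -/
def Interp.atoms (I : Interp) : Set Atom :=
  fun a => match a with
  | .c A o => o ∈ I.concept A
  | .r P o o' => (o, o') ∈ I.role P

/-- Concept or role names (symbols). -/
inductive SName where
  | c (A : ConceptName)
  | r (P : RoleName)
deriving DecidableEq

/-- Atom-based set distance: symmetric difference of atom sets. -/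
def distASub (I J : Interp) : Set Atom := symmDiff I.atoms J.atoms
/-- Atom-based cardinality distance. -/
noncomputable def distACard (I J : Interp) : ℕ∞ := (symmDiff I.atoms J.atoms).encard
/-- Symbol-based set distance: names interpreted differently. -/
def distSSub (I J : Interp) : Set SName :=
  fun n => match n with
  | .c A => I.concept A ≠ J.concept A
  | .r P => I.role P ≠ J.role P
/-- Symbol-based cardinality distance. -/
noncomputable def distSCard (I J : Interp) : ℕ∞ := (distSSub I J).encard

/-- Global expansion w.r.t. a distance. -/
def expGlobD {D : Type} [PartialOrder D] (dist : Interp → Interp → D)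
    (M N : Set Interp) : Set Interp :=
  {J | J ∈ N ∧ ∃ I ∈ M, ∀ I' ∈ M, ∀ J' ∈ N, ¬ dist I' J' < dist I J}

/-- Local expansion w.r.t. a distance. -/
def expLocD {D : Type} [PartialOrder D] (dist : Interp → Interp → D)
    (M N : Set Interp) : Set Interp :=
  {J | J ∈ N ∧ ∃ I ∈ M, ∀ J' ∈ N, ¬ dist I J' < dist I J}

inductive LocKind | glob | loc
inductive MeasKind | atoms | symbols
inductive OrdKind | subset | card

/-- The expansion operator on sets of interpretations for each of the
eight model-based semantics `X^y_z`. -/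
def expansionSet : LocKind → MeasKind → OrdKind → Set Interp → Set Interp → Set Interp
  | .glob, .atoms, .subset => expGlobD distASub
  | .glob, .atoms, .card => expGlobD distACard
  | .glob, .symbols, .subset => expGlobD distSSub
  | .glob, .symbols, .card => expGlobD distSCard
  | .loc, .atoms, .subset => expLocD distASub
  | .loc, .atoms, .card => expLocD distACard
  | .loc, .symbols, .subset => expLocD distSSub
  | .loc, .symbols, .card => expLocD distSCard

/-- KB expansion `K ⊕ N` under semantics `X^y_z`. -/
def expandKB (X : LocKind) (y : MeasKind) (z : OrdKind) (K N : KB) : Set Interp :=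
  expansionSet X y z (Mod K) (Mod N)

/-- KB contraction `K ⊖ N` under semantics `X^y_z`. -/
def contractKB (X : LocKind) (y : MeasKind) (z : OrdKind) (K N : KB) : Set Interp :=
  Mod K ∪ expansionSet X y z (Mod K) (NonMod N)

/-- Union of two interpretations. -/
def Interp.union (I1 I2 : Interp) : Interp :=
  ⟨fun A => I1.concept A ∪ I2.concept A, fun P => I1.role P ∪ I2.role P⟩

/-- The support set of an interpretation. -/
def Interp.support (I : Interp) : Set Δ :=
  (⋃ A, I.concept A) ∪ (⋃ P, {o | ∃ o', (o, o') ∈ I.role P ∨ (o', o) ∈ I.role P})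

/-- The image `I^f` of an interpretation under an (injective) map `f`. -/
def Interp.image (I : Interp) (f : Δ → Δ) : Interp :=
  ⟨fun A => f '' I.concept A, fun P => (fun p => (f p.1, f p.2)) '' I.role P⟩

/-- `h` is a homomorphism from `I` to `J`. -/
def IsHom (h : Δ → Δ) (I J : Interp) : Prop :=
  (∀ A, h '' I.concept A ⊆ J.concept A) ∧
  (∀ P o o', (o, o') ∈ I.role P → (h o, h o') ∈ J.role P)

end DLLite

namespace DLLite

/-!
Suppose `M = Mod K` and pick `Jφ, Jψ ∈ M` with `Jφ ⊭ φ` and `Jψ ⊭ ψ`. Glue them into one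
interpretation `H`: the direct product `Jφ × Jψ`, in which every constant `a` of `K`, `φ`, `ψ` is
the diagonal pair `(a, a)`, side by side with disjoint copies of `Jφ` and `Jψ`. TBox assertions are
preserved by products, and hold in a disjoint union iff they hold in each part; a membership
assertion holds in `H` iff it holds in the product, i.e. in both factors. So `H` satisfies exactly
the assertions over these constants that hold in both `Jφ` and `Jψ`: it is a model of `K`, hence
lies in `M`, yet it falsifies both `φ` and `ψ`.
-/

open Set Function

section

variable {α β γ : Type*}

theorem union_subset_union_iff_of_disjoint {s₁ s₂ t₁ t₂ : Set α}
    (h₁ : Disjoint s₁ t₂) (h₂ : Disjoint s₂ t₁) :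
    s₁ ∪ s₂ ⊆ t₁ ∪ t₂ ↔ s₁ ⊆ t₁ ∧ s₂ ⊆ t₂ := by
  refine ⟨fun h => ⟨fun x hx => ?_, fun x hx => ?_⟩, fun h => union_subset_union h.1 h.2⟩
  · exact (h (Or.inl hx)).resolve_right (disjoint_left.1 h₁ hx)
  · exact (h (Or.inr hx)).resolve_left (disjoint_left.1 h₂ hx)

theorem union_inter_union_eq_empty_iff_of_disjoint {s₁ s₂ t₁ t₂ : Set α}
    (h₁ : Disjoint s₁ t₂) (h₂ : Disjoint s₂ t₁) :
    (s₁ ∪ s₂) ∩ (t₁ ∪ t₂) = ∅ ↔ s₁ ∩ t₁ = ∅ ∧ s₂ ∩ t₂ = ∅ := by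
  simp only [union_inter_distrib_right, inter_union_distrib_left, h₁.inter_eq, h₂.inter_eq,
    union_empty, empty_union, union_empty_iff]

theorem image2_inter_image2_eq_empty {h : α → β → γ} (hh : Injective2 h)
    {s s' : Set α} (t t' : Set β) (hs : s ∩ s' = ∅) : image2 h s t ∩ image2 h s' t' = ∅ := by
  refine eq_empty_of_forall_notMem ?_
  rintro _ ⟨⟨x, hx, y, -, rfl⟩, hxy⟩
  exact (eq_empty_iff_forall_notMem.1 hs) x ⟨hx, ((mem_image2_iff hh).1 hxy).1⟩

theorem mem_image2_iff_of_apply_self {h : α → α → α} (hh : Injective2 h) {x : α}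
    (hx : h x x = x) {s t : Set α} : x ∈ image2 h s t ↔ x ∈ s ∧ x ∈ t := by
  have key := mem_image2_iff (s := s) (t := t) hh (a := x) (b := x)
  rwa [hx] at key

theorem injective2_componentwise {e : α → β → γ} (he : Injective2 e) :
    Injective2 fun (p : α × α) (q : β × β) => (e p.1 q.1, e p.2 q.2) := by
  rintro ⟨x, x'⟩ ⟨y, y'⟩ ⟨a, a'⟩ ⟨b, b'⟩ h
  simp only [Prod.mk.injEq, he.eq_iff] at h ⊢
  tauto

end

def Interp.prod (I J : Interp) (e : Δ → Δ → Δ) : Interp :=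
  ⟨fun A => image2 e (I.concept A) (J.concept A),
   fun P => image2 (fun p q => (e p.1 q.1, e p.2 q.2)) (I.role P) (J.role P)⟩

namespace BasicRole

variable (R : BasicRole) (I J : Interp)

theorem interp_union : R.interp (I.union J) = R.interp I ∪ R.interp J := by
  cases R <;> rfl

theorem interp_image (f : Δ → Δ) : R.interp (I.image f) = Prod.map f f '' R.interp I := by
  cases R with
  | pos P => rfl
  | inv P =>
    ext ⟨u, v⟩
    simp only [interp, Interp.image, mem_ofPred_eq, mem_image, Prod.exists, Prod.map,
      Prod.mk.injEq]
    constructor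
    · rintro ⟨x, y, h, rfl, rfl⟩
      exact ⟨y, x, h, rfl, rfl⟩
    · rintro ⟨x, y, h, rfl, rfl⟩
      exact ⟨y, x, h, rfl, rfl⟩

theorem interp_prod (e : Δ → Δ → Δ) :
    R.interp (I.prod J e) =
      image2 (fun p q => (e p.1 q.1, e p.2 q.2)) (R.interp I) (R.interp J) := by
  cases R with
  | pos P => rfl
  | inv P =>
    ext ⟨u, v⟩
    simp only [interp, Interp.prod, mem_ofPred_eq, mem_image2, Prod.exists, Prod.mk.injEq]
    constructor
    · rintro ⟨x, x', h, y, y', h', rfl, rfl⟩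
      exact ⟨x', x, h, y', y, h', rfl, rfl⟩
    · rintro ⟨x, x', h, y, y', h', rfl, rfl⟩
      exact ⟨x', x, h, y', y, h', rfl, rfl⟩

theorem fst_mem_support {o o' : Δ} (h : (o, o') ∈ R.interp I) : o ∈ I.support := by
  cases R with
  | pos P => exact Or.inr (mem_iUnion.2 ⟨P, o', Or.inl h⟩)
  | inv P => exact Or.inr (mem_iUnion.2 ⟨P, o', Or.inr h⟩)

end BasicRole

namespace BasicConcept

variable (B : BasicConcept) (I J : Interp)

theorem interp_ex (R : BasicRole) : (ex R).interp I = Prod.fst '' R.interp I := by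
  ext o
  simp [interp]

theorem interp_union : B.interp (I.union J) = B.interp I ∪ B.interp J := by
  cases B with
  | atom A => rfl
  | ex R => simp only [interp_ex, BasicRole.interp_union, image_union]

theorem interp_image (f : Δ → Δ) : B.interp (I.image f) = f '' B.interp I := by
  cases B with
  | atom A => rfl
  | ex R => simp only [interp_ex, BasicRole.interp_image, image_image, Prod.map_fst]

theorem interp_prod (e : Δ → Δ → Δ) :
    B.interp (I.prod J e) = image2 e (B.interp I) (B.interp J) := by
  cases B with
  | atom A => rfl
  | ex R => simp only [interp_ex, BasicRole.interp_prod, image_image2, image2_image_left,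
      image2_image_right]

theorem interp_subset_support : B.interp I ⊆ I.support := by
  cases B with
  | atom A => exact fun o h => Or.inl (mem_iUnion.2 ⟨A, h⟩)
  | ex R => rintro o ⟨o', h⟩; exact R.fst_mem_support I h

end BasicConcept

theorem Assertion.isTBox_or_isMembership (α : Assertion) : α.isTBox ∨ α.isMembership := by
  cases α <;> simp [Assertion.isTBox, Assertion.isMembership]

namespace Interp

variable {I J : Interp} {α : Assertion}

theorem sat_image_iff {f : Δ → Δ} (hf : Injective f) (hα : α.isTBox) :
    (I.image f).sat α ↔ I.sat α := by
  have hff : Injective (Prod.map f f) := hf.prodMap hf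
  cases α with
  | conceptIncl B₁ B₂ =>
    simp only [sat, BasicConcept.interp_image, image_subset_image_iff hf]
  | conceptDisj B₁ B₂ =>
    simp only [sat, BasicConcept.interp_image, ← image_inter hf, image_eq_empty]
  | roleIncl R₁ R₂ =>
    simp only [sat, BasicRole.interp_image, image_subset_image_iff hff]
  | roleDisj R₁ R₂ =>
    simp only [sat, BasicRole.interp_image, ← image_inter hff, image_eq_empty]
  | funct R =>
    simp only [sat, BasicRole.interp_image]
    constructor
    · intro h o o₁ o₂ h₁ h₂
      exact hf (h _ _ _ (mem_image_of_mem _ h₁) (mem_image_of_mem _ h₂))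
    · rintro h _ _ _ ⟨⟨o, o₁⟩, h₁, he₁⟩ ⟨⟨o', o₂⟩, h₂, he₂⟩
      simp only [Prod.map, Prod.mk.injEq] at he₁ he₂
      obtain ⟨rfl, rfl⟩ := he₁
      obtain ⟨ho, rfl⟩ := he₂
      rw [hf ho] at h₂
      rw [h o o₁ o₂ h₁ h₂]
  | memberC | memberR => exact hα.elim

theorem not_sat_image {f : Δ → Δ} (hα : α.isMembership) (hc : ∀ a ∈ α.constants, a ∉ range f) :
    ¬ (I.image f).sat α := by
  cases α with
  | memberC A a =>
    rintro ⟨x, -, rfl⟩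
    exact hc _ rfl (mem_range_self x)
  | memberR P a b =>
    rintro ⟨⟨x, y⟩, -, hxy⟩
    exact hc a (Or.inl rfl) ⟨x, congrArg Prod.fst hxy⟩
  | _ => exact hα.elim

theorem sat_prod {e : Δ → Δ → Δ} (he : Injective2 e) (hα : α.isTBox) (hI : I.sat α)
    (hJ : J.sat α) : (I.prod J e).sat α := by
  cases α with
  | conceptIncl B₁ B₂ =>
    simp only [sat, BasicConcept.interp_prod] at *
    exact image2_subset hI hJ
  | conceptDisj B₁ B₂ =>
    simp only [sat, BasicConcept.interp_prod] at *
    exact image2_inter_image2_eq_empty he _ _ hI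
  | roleIncl R₁ R₂ =>
    simp only [sat, BasicRole.interp_prod] at *
    exact image2_subset hI hJ
  | roleDisj R₁ R₂ =>
    simp only [sat, BasicRole.interp_prod] at *
    exact image2_inter_image2_eq_empty (injective2_componentwise he) _ _ hI
  | funct R =>
    simp only [sat, BasicRole.interp_prod] at *
    rintro _ _ _ ⟨⟨x, x₁⟩, hx₁, ⟨y, y₁⟩, hy₁, he₁⟩ ⟨⟨x', x₂⟩, hx₂, ⟨y', y₂⟩, hy₂, he₂⟩
    simp only [Prod.mk.injEq] at he₁ he₂
    obtain ⟨rfl, rfl⟩ := he₁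
    obtain ⟨hxy, rfl⟩ := he₂
    obtain ⟨rfl, rfl⟩ := he.eq_iff.1 hxy
    rw [hI _ _ _ hx₁ hx₂, hJ _ _ _ hy₁ hy₂]
  | memberC | memberR => exact hα.elim

theorem sat_prod_iff_of_isMembership {e : Δ → Δ → Δ} (he : Injective2 e) (hα : α.isMembership)
    (hc : ∀ a ∈ α.constants, e a a = a) : (I.prod J e).sat α ↔ I.sat α ∧ J.sat α := by
  cases α with
  | memberC A a => exact mem_image2_iff_of_apply_self he (hc a rfl)
  | memberR P a b =>
    refine mem_image2_iff_of_apply_self (injective2_componentwise he) ?_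
    rw [hc a (Or.inl rfl), hc b (Or.inr rfl)]
  | _ => exact hα.elim

theorem sat_union_iff (hd : Disjoint I.support J.support) (hα : α.isTBox) :
    (I.union J).sat α ↔ I.sat α ∧ J.sat α := by
  have hB (B₁ B₂ : BasicConcept) : Disjoint (B₁.interp I) (B₂.interp J) :=
    hd.mono (B₁.interp_subset_support I) (B₂.interp_subset_support J)
  have hR (R₁ R₂ : BasicRole) : Disjoint (R₁.interp I) (R₂.interp J) :=
    (hd.preimage Prod.fst).mono (fun _ => R₁.fst_mem_support I) (fun _ => R₂.fst_mem_support J)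
  cases α with
  | conceptIncl B₁ B₂ =>
    simp only [sat, BasicConcept.interp_union]
    exact union_subset_union_iff_of_disjoint (hB _ _) (hB _ _).symm
  | conceptDisj B₁ B₂ =>
    simp only [sat, BasicConcept.interp_union]
    exact union_inter_union_eq_empty_iff_of_disjoint (hB _ _) (hB _ _).symm
  | roleIncl R₁ R₂ =>
    simp only [sat, BasicRole.interp_union]
    exact union_subset_union_iff_of_disjoint (hR _ _) (hR _ _).symm
  | roleDisj R₁ R₂ =>
    simp only [sat, BasicRole.interp_union]
    exact union_inter_union_eq_empty_iff_of_disjoint (hR _ _) (hR _ _).symm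
  | funct R =>
    simp only [sat, BasicRole.interp_union]
    refine ⟨fun h => ⟨fun o o₁ o₂ h₁ h₂ => h o o₁ o₂ (Or.inl h₁) (Or.inl h₂),
      fun o o₁ o₂ h₁ h₂ => h o o₁ o₂ (Or.inr h₁) (Or.inr h₂)⟩, ?_⟩
    rintro ⟨hI, hJ⟩ o o₁ o₂ (h₁ | h₁) (h₂ | h₂)
    · exact hI o o₁ o₂ h₁ h₂
    · exact (disjoint_left.1 hd (R.fst_mem_support I h₁) (R.fst_mem_support J h₂)).elim
    · exact (disjoint_left.1 hd (R.fst_mem_support I h₂) (R.fst_mem_support J h₁)).elim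
    · exact hJ o o₁ o₂ h₁ h₂
  | memberC | memberR => exact hα.elim

theorem sat_union_iff_of_isMembership (hα : α.isMembership) :
    (I.union J).sat α ↔ I.sat α ∨ J.sat α := by
  cases α with
  | memberC | memberR => rfl
  | _ => exact hα.elim

theorem support_subset {S : Set Δ} (hc : ∀ A, I.concept A ⊆ S)
    (hr : ∀ P o o', (o, o') ∈ I.role P → o ∈ S ∧ o' ∈ S) : I.support ⊆ S := by
  rintro o (ho | ho)
  · obtain ⟨A, hA⟩ := mem_iUnion.1 ho
    exact hc A hA
  · obtain ⟨P, o', h | h⟩ := mem_iUnion.1 ho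
    exacts [(hr P _ _ h).1, (hr P _ _ h).2]

theorem support_union : (I.union J).support ⊆ I.support ∪ J.support := by
  refine support_subset (fun A => union_subset_union (fun _ h => Or.inl (mem_iUnion.2 ⟨A, h⟩))
    (fun _ h => Or.inl (mem_iUnion.2 ⟨A, h⟩))) ?_
  rintro P o o' (h | h)
  · exact ⟨Or.inl ((BasicRole.pos P).fst_mem_support I h),
      Or.inl ((BasicRole.inv P).fst_mem_support I h)⟩
  · exact ⟨Or.inr ((BasicRole.pos P).fst_mem_support J h),
      Or.inr ((BasicRole.inv P).fst_mem_support J h)⟩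

theorem support_image (f : Δ → Δ) : (I.image f).support ⊆ range f := by
  refine support_subset (fun A => image_subset_range _ _) ?_
  rintro P _ _ ⟨⟨x, y⟩, -, h⟩
  simp only [Prod.mk.injEq] at h
  exact ⟨⟨x, h.1⟩, ⟨y, h.2⟩⟩

theorem support_prod (e : Δ → Δ → Δ) : (I.prod J e).support ⊆ range (uncurry e) := by
  refine support_subset ?_ ?_
  · rintro A _ ⟨x, -, y, -, rfl⟩
    exact ⟨(x, y), rfl⟩
  · rintro P _ _ ⟨⟨x, x'⟩, -, ⟨y, y'⟩, -, h⟩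
    simp only [Prod.mk.injEq] at h
    exact ⟨⟨(x, y), h.1⟩, ⟨(x', y'), h.2⟩⟩

end Interp

/-- `pair` names the elements of the product of two interpretations, `left` and `right` those of
disjoint copies of each factor; a constant `a ∈ F` names the diagonal pair `(a, a)`. -/
structure Gluing (F : Set Δ) where
  pair : Δ → Δ → Δ
  left : Δ → Δ
  right : Δ → Δ
  pair_injective2 : Injective2 pair
  left_injective : Injective left
  right_injective : Injective right
  disjoint_pair_left : Disjoint (range (uncurry pair)) (range left)
  disjoint_pair_right : Disjoint (range (uncurry pair)) (range right)
  disjoint_left_right : Disjoint (range left) (range right)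
  pair_self : ∀ a ∈ F, pair a a = a

namespace Gluing

variable {F : Set Δ}

def glue (G : Gluing F) (I J : Interp) : Interp :=
  ((I.prod J G.pair).union (I.image G.left)).union (J.image G.right)

theorem sat_glue_iff (G : Gluing F) {I J : Interp} {α : Assertion} (hα : α.constants ⊆ F) :
    (G.glue I J).sat α ↔ I.sat α ∧ J.sat α := by
  have hpair : ∀ a ∈ α.constants, G.pair a a = a := fun a ha => G.pair_self a (hα ha)
  rcases α.isTBox_or_isMembership with hT | hM
  · have hd₁ : Disjoint (I.prod J G.pair).support (I.image G.left).support :=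
      G.disjoint_pair_left.mono (Interp.support_prod _) (Interp.support_image _)
    have hd₂ : Disjoint ((I.prod J G.pair).union (I.image G.left)).support
        (J.image G.right).support :=
      (disjoint_union_left.2 ⟨G.disjoint_pair_right, G.disjoint_left_right⟩).mono
        (Interp.support_union.trans (union_subset_union (Interp.support_prod _)
          (Interp.support_image _)))
        (Interp.support_image _)
    rw [glue, Interp.sat_union_iff hd₂ hT, Interp.sat_union_iff hd₁ hT,
      Interp.sat_image_iff G.left_injective hT, Interp.sat_image_iff G.right_injective hT]
    exact ⟨fun h => ⟨h.1.2, h.2⟩,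
      fun h => ⟨⟨Interp.sat_prod G.pair_injective2 hT h.1 h.2, h.1⟩, h.2⟩⟩
  · have hl : ∀ a ∈ α.constants, a ∉ range G.left := fun a ha =>
      disjoint_left.1 G.disjoint_pair_left ⟨(a, a), hpair a ha⟩
    have hr : ∀ a ∈ α.constants, a ∉ range G.right := fun a ha =>
      disjoint_left.1 G.disjoint_pair_right ⟨(a, a), hpair a ha⟩
    rw [glue, Interp.sat_union_iff_of_isMembership hM, Interp.sat_union_iff_of_isMembership hM,
      or_iff_left (Interp.not_sat_image hM hr), or_iff_left (Interp.not_sat_image hM hl),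
      Interp.sat_prod_iff_of_isMembership G.pair_injective2 hM hpair]

theorem nonempty_of_bddAbove (hF : BddAbove F) : Nonempty (Gluing F) := by
  obtain ⟨b, hb⟩ := hF
  refine ⟨{
    pair := fun x y => if x = y ∧ x ≤ b then x else b + 1 + 3 * Nat.pair x y
    left := fun x => b + 3 * x + 2
    right := fun x => b + 3 * x + 3
    pair_injective2 := ?_
    left_injective := fun x y h => by dsimp only at h; lia
    right_injective := fun x y h => by dsimp only at h; lia
    disjoint_pair_left := ?_
    disjoint_pair_right := ?_
    disjoint_left_right := ?_
    pair_self := fun a ha => if_pos ⟨rfl, hb ha⟩ }⟩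
  · intro x x' y y' h
    dsimp only at h
    split_ifs at h
    · lia
    · lia
    · lia
    · exact Nat.pair_eq_pair.1 (by lia)
  iterate 2
    rw [disjoint_left]
    rintro _ ⟨⟨x, y⟩, rfl⟩ ⟨z, hz⟩
    dsimp only [uncurry] at hz
    split_ifs at hz <;> lia
  rw [disjoint_left]
  rintro _ ⟨x, rfl⟩ ⟨z, hz⟩
  lia

end Gluing

theorem Assertion.finite_constants (α : Assertion) : α.constants.Finite := by
  cases α <;> simp [Assertion.constants]

theorem KB.finite_constants (K : KB) : K.constants.Finite :=
  K.finite_toSet.biUnion fun α _ => α.finite_constants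

theorem KB.subset_constants {K : KB} {α : Assertion} (hα : α ∈ K) :
    α.constants ⊆ K.constants :=
  subset_biUnion_of_mem (u := Assertion.constants) (Finset.mem_coe.2 hα)

/-- Theorem (no disjunction in DL-Lite_FR): if every interpretation of `M`
satisfies `φ` or `ψ`, but some member of `M` falsifies `φ` and some member
falsifies `ψ`, then `M` is not the set of models of any DL-Lite_FR KB. -/
theorem no_disjunction_dllite (M : Set Interp) (φ ψ : Assertion)
    (h1 : ∀ J ∈ M, J.sat φ ∨ J.sat ψ)
    (h2 : ∃ Jφ ∈ M, ¬ Jφ.sat φ)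
    (h3 : ∃ Jψ ∈ M, ¬ Jψ.sat ψ) :
    ¬ ∃ K : KB, M = Mod K := by
  rintro ⟨K, rfl⟩
  obtain ⟨Jφ, hJφ, hφ⟩ := h2
  obtain ⟨Jψ, hJψ, hψ⟩ := h3
  obtain ⟨G⟩ := Gluing.nonempty_of_bddAbove
    (K.finite_constants.union (φ.finite_constants.union ψ.finite_constants)).bddAbove
  have hglue : G.glue Jφ Jψ ∈ Mod K := fun α hα =>
    (G.sat_glue_iff (subset_union_of_subset_left (K.subset_constants hα) _)).2
      ⟨hJφ α hα, hJψ α hα⟩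
  rcases h1 _ hglue with h | h
  · exact hφ ((G.sat_glue_iff (subset_union_of_subset_right subset_union_left _)).1 h).1
  · exact hψ ((G.sat_glue_iff (subset_union_of_subset_right subset_union_right _)).1 h).2

end DLLite
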